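/- For i = 1, 2, the ECDM estimator W_{in} of tr(Σᵢ²) is exactly unbiased: E(W_{in}) = tr(Σᵢ²). -/

import Mathlib

open MeasureTheory ProbabilityTheory Filter Matrix Finset

noncomputable section

/-- The ECDM data model: `x_j = Γ w_j + μ`, `j = 1,…,n`, where the `w_j` are i.i.d. with
mean `0`, covariance `I_q` and finite fourth moments.  The `p = p₁ + p₂` coordinates are
partitioned into the first `p₁` rows (`Γ₁`, `μ₁`) and the last `p₂` rows (`Γ₂`, `μ₂`). -/
structure ECDMModel (Ω : Type) [MeasurableSpace Ω] where
  P : Measure Ω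
  isProb : IsProbabilityMeasure P
  p₁ : ℕ
  p₂ : ℕ
  q : ℕ
  n : ℕ
  hp₁ : 1 ≤ p₁
  hp₂ : 1 ≤ p₂
  hn : 4 ≤ n
  Γ₁ : Matrix (Fin p₁) (Fin q) ℝ
  Γ₂ : Matrix (Fin p₂) (Fin q) ℝ
  μ₁ : Fin p₁ → ℝ
  μ₂ : Fin p₂ → ℝ
  w : ℕ → Ω → Fin q → ℝ
  w_meas : ∀ j, Measurable (w j)
  w_indep : iIndepFun (m := fun _ : ℕ => MeasurableSpace.pi) w P
  w_ident : ∀ j j', IdentDistrib (w j) (w j') P P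
  w_mean : ∀ j r, ∫ ω, w j ω r ∂P = 0
  w_cov : ∀ j r s, ∫ ω, w j ω r * w j ω s ∂P = if r = s then 1 else 0
  w_mom4 : ∀ j r, Integrable (fun ω => (w j ω r) ^ 4) P

namespace ECDMModel

variable {Ω : Type} [MeasurableSpace Ω]

/-- The first block `x_{1j} = Γ₁ w_j + μ₁` of the `j`-th observation. -/
def x1 (M : ECDMModel Ω) (j : ℕ) (ω : Ω) : Fin M.p₁ → ℝ :=
  fun a => M.Γ₁.mulVec (M.w j ω) a + M.μ₁ a

/-- The second block `x_{2j} = Γ₂ w_j + μ₂` of the `j`-th observation. -/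
def x2 (M : ECDMModel Ω) (j : ℕ) (ω : Ω) : Fin M.p₂ → ℝ :=
  fun a => M.Γ₂.mulVec (M.w j ω) a + M.μ₂ a

/-- `n₍₁₎ = ⌈n/2⌉`. -/
def n1 (M : ECDMModel Ω) : ℕ := (M.n + 1) / 2

/-- `n₍₂₎ = n − n₍₁₎`. -/
def n2 (M : ECDMModel Ω) : ℕ := M.n - M.n1

/-- `n₍ᵢ₎` for `i = 1, 2`. -/
def nsub (M : ECDMModel Ω) (i : ℕ) : ℕ := if i = 1 then M.n1 else M.n2

/-- The ECDM index set `V_{n(1)(k)}`. -/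
def V1 (M : ECDMModel Ω) (k : ℕ) : Finset ℕ :=
  if M.n1 ≤ k / 2 then Finset.Icc (k / 2 - M.n1 + 1) (k / 2)
  else Finset.Icc 1 (k / 2) ∪ Finset.Icc (k / 2 + M.n2 + 1) M.n

/-- The ECDM index set `V_{n(2)(k)}`. -/
def V2 (M : ECDMModel Ω) (k : ℕ) : Finset ℕ :=
  if k / 2 ≤ M.n1 then Finset.Icc (k / 2 + 1) (k / 2 + M.n2)
  else Finset.Icc 1 (k / 2 - M.n1) ∪ Finset.Icc (k / 2 + 1) M.n

/-- The ECDM index set `V_{n(i)(k)}` for `i = 1, 2`. -/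
def Vset (M : ECDMModel Ω) (i k : ℕ) : Finset ℕ := if i = 1 then M.V1 k else M.V2 k

/-- `x̄_{1(i)(k)} = n₍ᵢ₎⁻¹ Σ_{j ∈ V_{n(i)(k)}} x_{1j}`. -/
def xbar1 (M : ECDMModel Ω) (i k : ℕ) (ω : Ω) : Fin M.p₁ → ℝ :=
  fun a => (∑ j ∈ M.Vset i k, M.x1 j ω a) / (M.nsub i : ℝ)

/-- `x̄_{2(i)(k)} = n₍ᵢ₎⁻¹ Σ_{j ∈ V_{n(i)(k)}} x_{2j}`. -/
def xbar2 (M : ECDMModel Ω) (i k : ℕ) (ω : Ω) : Fin M.p₂ → ℝ :=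
  fun a => (∑ j ∈ M.Vset i k, M.x2 j ω a) / (M.nsub i : ℝ)

/-- `Δ̂_{ij} = (x_{1i}−x̄_{1(1)(i+j)})ᵀ(x_{1j}−x̄_{1(2)(i+j)}) ·
(x_{2i}−x̄_{2(1)(i+j)})ᵀ(x_{2j}−x̄_{2(2)(i+j)})`. -/
def Dhat (M : ECDMModel Ω) (i j : ℕ) (ω : Ω) : ℝ :=
  (∑ a, (M.x1 i ω a - M.xbar1 1 (i + j) ω a) * (M.x1 j ω a - M.xbar1 2 (i + j) ω a)) *
  (∑ a, (M.x2 i ω a - M.xbar2 1 (i + j) ω a) * (M.x2 j ω a - M.xbar2 2 (i + j) ω a))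

/-- `u_n = n₍₁₎n₍₂₎/((n₍₁₎−1)(n₍₂₎−1))`. -/
def u (M : ECDMModel Ω) : ℝ :=
  ((M.n1 : ℝ) * (M.n2 : ℝ)) / (((M.n1 : ℝ) - 1) * ((M.n2 : ℝ) - 1))

/-- The ECDM estimator `T̂_n = (2u_n/(n(n−1))) Σ_{i<j} Δ̂_{ij}`. -/
def That (M : ECDMModel Ω) (ω : Ω) : ℝ :=
  2 * M.u / ((M.n : ℝ) * ((M.n : ℝ) - 1)) *
    ∑ j ∈ Finset.Icc 1 M.n, ∑ i ∈ Finset.Ico 1 j, M.Dhat i j ω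

/-- `W_{1n}`, the ECDM estimator of `tr(Σ₁²)`. -/
def W1 (M : ECDMModel Ω) (ω : Ω) : ℝ :=
  2 * M.u / ((M.n : ℝ) * ((M.n : ℝ) - 1)) *
    ∑ s ∈ Finset.Icc 1 M.n, ∑ r ∈ Finset.Ico 1 s,
      (∑ a, (M.x1 r ω a - M.xbar1 1 (r + s) ω a) * (M.x1 s ω a - M.xbar1 2 (r + s) ω a)) ^ 2

/-- `W_{2n}`, the ECDM estimator of `tr(Σ₂²)`. -/
def W2 (M : ECDMModel Ω) (ω : Ω) : ℝ :=
  2 * M.u / ((M.n : ℝ) * ((M.n : ℝ) - 1)) *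
    ∑ s ∈ Finset.Icc 1 M.n, ∑ r ∈ Finset.Ico 1 s,
      (∑ a, (M.x2 r ω a - M.xbar2 1 (r + s) ω a) * (M.x2 s ω a - M.xbar2 2 (r + s) ω a)) ^ 2

/-- `Σ₁ = Γ₁ Γ₁ᵀ`. -/
def Sig1 (M : ECDMModel Ω) : Matrix (Fin M.p₁) (Fin M.p₁) ℝ := M.Γ₁ * M.Γ₁ᵀ

/-- `Σ₂ = Γ₂ Γ₂ᵀ`. -/
def Sig2 (M : ECDMModel Ω) : Matrix (Fin M.p₂) (Fin M.p₂) ℝ := M.Γ₂ * M.Γ₂ᵀ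

/-- `Σ* = Γ₁ Γ₂ᵀ`. -/
def Sigs (M : ECDMModel Ω) : Matrix (Fin M.p₁) (Fin M.p₂) ℝ := M.Γ₁ * M.Γ₂ᵀ

/-- `Δ = tr(Σ* Σ*ᵀ)`. -/
def Delta (M : ECDMModel Ω) : ℝ := Matrix.trace (M.Sigs * M.Sigsᵀ)

/-- `Ψ = tr(Σ₁²) tr(Σ₂²)`. -/
def Psi (M : ECDMModel Ω) : ℝ := Matrix.trace (M.Sig1 ^ 2) * Matrix.trace (M.Sig2 ^ 2)

/-- `Υ = tr(Σ₁ Σ* Σ₂ Σ*ᵀ)`. -/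
def Upsilon (M : ECDMModel Ω) : ℝ := Matrix.trace (M.Sig1 * M.Sigs * M.Sig2 * M.Sigsᵀ)

/-- `Ω = tr(Σ₁⁴) tr(Σ₂⁴)`. -/
def Omeg (M : ECDMModel Ω) : ℝ := Matrix.trace (M.Sig1 ^ 4) * Matrix.trace (M.Sig2 ^ 4)

/-- `M_r = Var(w_{rj}²)`. -/
def Mom (M : ECDMModel Ω) (r : Fin M.q) : ℝ := variance (fun ω => (M.w 1 ω r) ^ 2) M.P

/-- `δ = √(2 tr(Σ₁²) tr(Σ₂²))/n`. -/
def delta (M : ECDMModel Ω) : ℝ := Real.sqrt (2 * M.Psi) / (M.n : ℝ)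

/-- `δ̂ = √(2 W_{1n} W_{2n})/n`. -/
def deltahat (M : ECDMModel Ω) (ω : Ω) : ℝ := Real.sqrt (2 * M.W1 ω * M.W2 ω) / (M.n : ℝ)

/-- The leading variance term
`K² = (4/n)[Υ + tr((Σ*Σ*ᵀ)²) + Σ_j (M_j−2)(γ_{1j}ᵀ Σ* γ_{2j})²] + (2/n²)[Ψ + Δ²]`. -/
def K2 (M : ECDMModel Ω) : ℝ :=
  4 / (M.n : ℝ) *
    (M.Upsilon + Matrix.trace ((M.Sigs * M.Sigsᵀ) ^ 2) +
      ∑ j, (M.Mom j - 2) * (∑ a, ∑ b, M.Γ₁ a j * M.Sigs a b * M.Γ₂ b j) ^ 2) +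
  2 / (M.n : ℝ) ^ 2 * (M.Psi + M.Delta ^ 2)

/-- Assumption (A-i). -/
def Ai (M : ECDMModel Ω) : Prop :=
  (∀ j, ∀ r s : Fin M.q, r ≠ s →
    ∫ ω, (M.w j ω r) ^ 2 * (M.w j ω s) ^ 2 ∂M.P = 1) ∧
  (∀ j, ∀ r s t v : Fin M.q, r ≠ s → r ≠ t → r ≠ v →
    ∫ ω, M.w j ω r * M.w j ω s * M.w j ω t * M.w j ω v ∂M.P = 0)

/-- Assumption (A-ii). -/
def Aii (M : ECDMModel Ω) : Prop :=
  ∀ j (v : ℕ), v ≤ 8 → ∀ r : Fin v → Fin M.q, Function.Injective r →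
    ∀ α : Fin v → ℕ, (∀ i, 1 ≤ α i ∧ α i ≤ 4) → (∑ i, α i) ≤ 8 →
      ∫ ω, ∏ i, (M.w j ω (r i)) ^ (α i) ∂M.P = ∏ i, ∫ ω, (M.w j ω (r i)) ^ (α i) ∂M.P

end ECDMModel

/-- Assumption (A-iii) along a sequence of models. -/
def Aiii {Ω : ℕ → Type} [∀ k, MeasurableSpace (Ω k)] (M : ∀ k, ECDMModel (Ω k)) : Prop :=
  Tendsto (fun k =>
      min (Matrix.trace ((M k).Sig1 ^ 4) / Matrix.trace ((M k).Sig1 ^ 2) ^ 2)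
          (Matrix.trace ((M k).Sig2 ^ 4) / Matrix.trace ((M k).Sig2 ^ 2) ^ 2))
    atTop (nhds 0)

/-- Assumption (A-iv) along a sequence of models (in particular `Δ > 0`). -/
def Aiv {Ω : ℕ → Type} [∀ k, MeasurableSpace (Ω k)] (M : ∀ k, ECDMModel (Ω k)) : Prop :=
  (∀ k, 0 < (M k).Delta) ∧
    Tendsto (fun k => (M k).Psi / (((M k).n : ℝ) ^ 2 * (M k).Delta ^ 2)) atTop (nhds 0)

/-- Assumption (A-v) along a sequence of models. -/
def Av {Ω : ℕ → Type} [∀ k, MeasurableSpace (Ω k)] (M : ∀ k, ECDMModel (Ω k)) : Prop :=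
  ∃ C : ℝ, ∀ k, ((M k).n : ℝ) ^ 2 * (M k).Delta ^ 2 / (M k).Psi ≤ C

/-- The asymptotic framework: `m = min(p, n) → ∞` and `limsup_k sup_r M_r < ∞`
(stated as boundedness), together with positivity of `tr(Σᵢ²)`. -/
def Framework {Ω : ℕ → Type} [∀ k, MeasurableSpace (Ω k)] (M : ∀ k, ECDMModel (Ω k)) : Prop :=
  Tendsto (fun k => min ((M k).p₁ + (M k).p₂) ((M k).n)) atTop atTop ∧
  (∃ C : ℝ, ∀ k r, (M k).Mom r ≤ C) ∧
  (∀ k, 0 < Matrix.trace ((M k).Sig1 ^ 2) ∧ 0 < Matrix.trace ((M k).Sig2 ^ 2))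

namespace ECDMModel

variable {Ω : Type} [MeasurableSpace Ω]

/-- `Δ̂_{ij,0}` for a candidate matrix `Σ₀`. -/
def Dhat0 (M : ECDMModel Ω) (S0 : Matrix (Fin M.p₁) (Fin M.p₂) ℝ) (i j : ℕ) (ω : Ω) : ℝ :=
  M.u * M.Dhat i j ω -
    (M.n1 : ℝ) / ((M.n1 : ℝ) - 1) *
      ∑ a, ∑ b, (M.x1 i ω a - M.xbar1 1 (i + j) ω a) * S0 a b *
        (M.x2 i ω b - M.xbar2 1 (i + j) ω b) -
    (M.n2 : ℝ) / ((M.n2 : ℝ) - 1) *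
      ∑ a, ∑ b, (M.x1 j ω a - M.xbar1 2 (i + j) ω a) * S0 a b *
        (M.x2 j ω b - M.xbar2 2 (i + j) ω b)

/-- The covariance-structure test statistic
`T̂_{n,0} = (2/(n(n−1))) Σ_{i<j} Δ̂_{ij,0} + ‖Σ₀‖_F²`. -/
def That0 (M : ECDMModel Ω) (S0 : Matrix (Fin M.p₁) (Fin M.p₂) ℝ) (ω : Ω) : ℝ :=
  2 / ((M.n : ℝ) * ((M.n : ℝ) - 1)) *
      ∑ j ∈ Finset.Icc 1 M.n, ∑ i ∈ Finset.Ico 1 j, M.Dhat0 S0 i j ω +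
    Matrix.trace (S0 * S0ᵀ)

/-- `Δ₀ = ‖Σ* − Σ₀‖_F²`. -/
def Delta0 (M : ECDMModel Ω) (S0 : Matrix (Fin M.p₁) (Fin M.p₂) ℝ) : ℝ :=
  Matrix.trace ((M.Sigs - S0) * (M.Sigs - S0)ᵀ)

/-- `ω_{ij} = Σ_{r≠s} Σ_{t≠u} (γ_{1r}ᵀγ_{1t})(γ_{2s}ᵀγ_{2u}) w_{ri} w_{si} w_{tj} w_{uj}`. -/
def omegaT (M : ECDMModel Ω) (i j : ℕ) (ω : Ω) : ℝ :=
  ∑ r, ∑ s, ∑ t, ∑ v,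
    if r ≠ s ∧ t ≠ v then
      (∑ a, M.Γ₁ a r * M.Γ₁ a t) * (∑ b, M.Γ₂ b s * M.Γ₂ b v) *
        (M.w i ω r * M.w i ω s * M.w j ω t * M.w j ω v)
    else 0

/-- `V_n = (2/(n(n−1))) Σ_{i<j} ω_{ij}`. -/
def Vn (M : ECDMModel Ω) (ω : Ω) : ℝ :=
  2 / ((M.n : ℝ) * ((M.n : ℝ) - 1)) *
    ∑ j ∈ Finset.Icc 1 M.n, ∑ i ∈ Finset.Ico 1 j, M.omegaT i j ω

end ECDMModel

/-!
For `r < s` put `k = r + s`. Then `x_r - x̄_(1)(k) = Γ η` and `x_s - x̄_(2)(k) = Γ ζ`, where `η` and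
`ζ` are the noises `w_r`, `w_s` centred at their means over `V_(1)(k) ∋ r` and `V_(2)(k) ∋ s`.
These index sets are disjoint, of sizes `n₍₁₎` and `n₍₂₎`, so `η` and `ζ` are independent and
isotropic with variances `1 - 1/n₍₁₎` and `1 - 1/n₍₂₎`. Hence every summand of `W_in` has mean
`(1 - 1/n₍₁₎)(1 - 1/n₍₂₎) tr((ΓΓᵀ)²)`, and `u_n` is exactly the reciprocal of that factor.
-/

section Moments

variable {Ω ι κ : Type*} [MeasurableSpace Ω] {μ : Measure Ω}

theorem integral_sum_mul_sum_of_uncorrelated [DecidableEq ι] {ξ ξ' : ι → Ω → ℝ}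
    (hξ : ∀ j, MemLp (ξ j) 2 μ) (hξ' : ∀ j, MemLp (ξ' j) 2 μ) {ρ : ℝ}
    (hcorr : ∀ j k, ∫ ω, ξ j ω * ξ' k ω ∂μ = if j = k then ρ else 0)
    (S : Finset ι) (α β : ι → ℝ) :
    ∫ ω, (∑ j ∈ S, α j * ξ j ω) * (∑ k ∈ S, β k * ξ' k ω) ∂μ = ρ * ∑ j ∈ S, α j * β j := by
  have hmul : ∀ j k ω, α j * ξ j ω * (β k * ξ' k ω) = α j * β k * (ξ j ω * ξ' k ω) :=
    fun _ _ _ => by ring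
  have hint : ∀ j k, Integrable (fun ω => α j * β k * (ξ j ω * ξ' k ω)) μ := fun j k =>
    ((hξ j).integrable_mul (hξ' k)).const_mul _
  simp only [Finset.sum_mul_sum, hmul]
  rw [integral_finsetSum _ fun j _ => integrable_finsetSum _ fun k _ => hint j k]
  simp only [integral_finsetSum _ fun k _ => hint _ k, integral_const_mul, hcorr, mul_ite,
    mul_zero, Finset.sum_ite_eq, Finset.mul_sum]
  exact Finset.sum_congr rfl fun j hj => by simp [hj, mul_comm]

theorem dotProduct_mulVec_eq_sum [Fintype ι] [Fintype κ] (A : Matrix ι κ ℝ) (v : ι → ℝ)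
    (w : κ → ℝ) : v ⬝ᵥ A *ᵥ w = ∑ p : ι × κ, A p.1 p.2 * (v p.1 * w p.2) := by
  simp only [dotProduct, mulVec, Finset.mul_sum, Fintype.sum_prod_type]
  exact Finset.sum_congr rfl fun c _ => Finset.sum_congr rfl fun d _ => by ring

theorem integrable_and_integral_sq_dotProduct_mulVec [Fintype ι] [Fintype κ] [DecidableEq ι]
    [DecidableEq κ] {η : Ω → ι → ℝ} {ζ : Ω → κ → ℝ} (hind : IndepFun η ζ μ)
    (hη : ∀ c, MemLp (fun ω => η ω c) 2 μ) (hζ : ∀ d, MemLp (fun ω => ζ ω d) 2 μ) {σ τ : ℝ}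
    (hηcov : ∀ c c', ∫ ω, η ω c * η ω c' ∂μ = if c = c' then σ else 0)
    (hζcov : ∀ d d', ∫ ω, ζ ω d * ζ ω d' ∂μ = if d = d' then τ else 0) (A : Matrix ι κ ℝ) :
    Integrable (fun ω => (η ω ⬝ᵥ A *ᵥ ζ ω) ^ 2) μ ∧
      ∫ ω, (η ω ⬝ᵥ A *ᵥ ζ ω) ^ 2 ∂μ = σ * τ * trace (A * Aᵀ) := by
  have hind' : ∀ p p' : ι × κ, IndepFun (fun ω => η ω p.1 * η ω p'.1)
      (fun ω => ζ ω p.2 * ζ ω p'.2) μ := fun p p' =>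
    hind.comp (φ := fun v : ι → ℝ => v p.1 * v p'.1) (ψ := fun v : κ → ℝ => v p.2 * v p'.2)
      (by fun_prop) (by fun_prop)
  have hintη : ∀ c c', Integrable (fun ω => η ω c * η ω c') μ := fun c c' =>
    (hη c).integrable_mul (hη c')
  have hintζ : ∀ d d', Integrable (fun ω => ζ ω d * ζ ω d') μ := fun d d' =>
    (hζ d).integrable_mul (hζ d')
  have hint : ∀ p p' : ι × κ, Integrable
      (fun ω => (η ω p.1 * η ω p'.1) * (ζ ω p.2 * ζ ω p'.2)) μ := fun p p' =>
    (hind' p p').integrable_mul (hintη _ _) (hintζ _ _)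
  have hmoment : ∀ p p' : ι × κ, ∫ ω, (η ω p.1 * η ω p'.1) * (ζ ω p.2 * ζ ω p'.2) ∂μ
      = if p = p' then σ * τ else 0 := fun p p' => by
    rw [(hind' p p').integral_fun_mul_eq_mul_integral (hintη _ _).aestronglyMeasurable
      (hintζ _ _).aestronglyMeasurable, hηcov, hζcov, ite_zero_mul_ite_zero]
    simp only [Prod.ext_iff]
  have hexpand : ∀ ω, (η ω ⬝ᵥ A *ᵥ ζ ω) ^ 2 = ∑ p : ι × κ, ∑ p' : ι × κ,
      A p.1 p.2 * A p'.1 p'.2 * ((η ω p.1 * η ω p'.1) * (ζ ω p.2 * ζ ω p'.2)) := fun ω => by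
    rw [dotProduct_mulVec_eq_sum, sq, Finset.sum_mul_sum]
    exact Finset.sum_congr rfl fun p _ => Finset.sum_congr rfl fun p' _ => by ring
  have hint' : ∀ p p' : ι × κ, Integrable (fun ω => A p.1 p.2 * A p'.1 p'.2 *
      ((η ω p.1 * η ω p'.1) * (ζ ω p.2 * ζ ω p'.2))) μ := fun p p' => (hint p p').const_mul _
  simp only [hexpand]
  refine ⟨integrable_finsetSum _ fun p _ => integrable_finsetSum _ fun p' _ => hint' p p', ?_⟩
  rw [integral_finsetSum _ fun p _ => integrable_finsetSum _ fun p' _ => hint' p p']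
  have hrow : ∀ p : ι × κ, ∫ ω, ∑ p' : ι × κ, A p.1 p.2 * A p'.1 p'.2 *
      ((η ω p.1 * η ω p'.1) * (ζ ω p.2 * ζ ω p'.2)) ∂μ = σ * τ * (A p.1 p.2 * A p.1 p.2) := by
    intro p
    rw [integral_finsetSum _ fun p' _ => hint' p p']
    simp only [integral_const_mul, hmoment, mul_ite, mul_zero, Finset.sum_ite_eq, Finset.mem_univ,
      if_true]
    ring
  simp only [hrow, ← Finset.mul_sum, trace, Matrix.diag, mul_apply, transpose_apply]
  rw [Fintype.sum_prod_type]

end Moments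

theorem sum_sq_indicator_sub_inv_card {ι : Type*} [DecidableEq ι] {S : Finset ι} {r : ι}
    (hr : r ∈ S) :
    ∑ j ∈ S, ((if j = r then 1 else 0) - (#S : ℝ)⁻¹) * ((if j = r then 1 else 0) - (#S : ℝ)⁻¹) =
      1 - (#S : ℝ)⁻¹ := by
  have hS : (#S : ℝ) ≠ 0 := Nat.cast_ne_zero.2 (Finset.card_ne_zero_of_mem hr)
  simp only [sub_mul, mul_sub, ite_mul, mul_ite, one_mul, mul_one, zero_mul, mul_zero,
    Finset.sum_sub_distrib, Finset.sum_ite_eq', if_pos hr, if_true, Finset.sum_const, nsmul_eq_mul]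
  field_simp
  ring

theorem sub_inv_smul_sum_mulVec_add {m n ι : Type*} [Fintype n] {Γ : Matrix m n ℝ} (μ : m → ℝ)
    (v : ι → n → ℝ) {S : Finset ι} {r : ι} (hr : r ∈ S) :
    (Γ *ᵥ v r + μ) - (#S : ℝ)⁻¹ • ∑ j ∈ S, (Γ *ᵥ v j + μ) =
      Γ *ᵥ (v r - (#S : ℝ)⁻¹ • ∑ j ∈ S, v j) := by
  have hS : (#S : ℝ) ≠ 0 := Nat.cast_ne_zero.2 (Finset.card_ne_zero_of_mem hr)
  rw [Finset.sum_add_distrib, Finset.sum_const, smul_add, ← Nat.cast_smul_eq_nsmul ℝ, smul_smul,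
    inv_mul_cancel₀ hS, one_smul, mulVec_sub, mulVec_smul, mulVec_sum]
  abel

theorem trace_sq_transpose_mul_self {m n : Type*} [Fintype m] [Fintype n] [DecidableEq m]
    (Γ : Matrix m n ℝ) :
    trace (Γᵀ * Γ * (Γᵀ * Γ)ᵀ) = trace ((Γ * Γᵀ) ^ 2) := by
  rw [transpose_mul, transpose_transpose, sq, Matrix.mul_assoc, trace_mul_comm, Matrix.mul_assoc,
    Matrix.mul_assoc, Matrix.mul_assoc]

theorem dotProduct_mulVec_mulVec {m n : Type*} [Fintype m] [Fintype n] (Γ : Matrix m n ℝ)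
    (v w : n → ℝ) : (Γ *ᵥ v) ⬝ᵥ (Γ *ᵥ w) = v ⬝ᵥ (Γᵀ * Γ) *ᵥ w := by
  rw [← mulVec_mulVec, dotProduct_mulVec v Γᵀ, vecMul_transpose]

theorem sum_Icc_sum_Ico_const (n : ℕ) (κ : ℝ) :
    ∑ s ∈ Finset.Icc 1 n, ∑ _r ∈ Finset.Ico 1 s, κ = n * (n - 1) / 2 * κ := by
  induction n with
  | zero => simp
  | succ n ih =>
    rw [Finset.sum_Icc_succ_top (by omega), ih, Finset.sum_const, Nat.card_Ico, nsmul_eq_mul]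
    push_cast
    ring

namespace ECDMModel

variable {Ω : Type} [MeasurableSpace Ω] (M : ECDMModel Ω)

theorem memLp_w (j : ℕ) (c : Fin M.q) : MemLp (fun ω => M.w j ω c) 2 M.P := by
  have hmeas : Measurable fun ω => M.w j ω c := (measurable_pi_apply c).comp (M.w_meas j)
  refine (memLp_two_iff_integrable_sq hmeas.aestronglyMeasurable).2 ?_
  simp only [sq]
  -- `∫ w_{jc}² = 1 ≠ 0`, which a non-integrable function cannot have
  exact .of_integral_ne_zero (by simp [M.w_cov])

theorem integral_w_mul_w (j k : ℕ) (c c' : Fin M.q) :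
    ∫ ω, M.w j ω c * M.w k ω c' ∂M.P = if j = k then (if c = c' then 1 else 0) else 0 := by
  by_cases hjk : j = k
  · subst hjk
    simp only [if_true, M.w_cov]
  · have hind : IndepFun (fun ω => M.w j ω c) (fun ω => M.w k ω c') M.P :=
      (M.w_indep.indepFun hjk).comp (measurable_pi_apply c) (measurable_pi_apply c')
    rw [hind.integral_fun_mul_eq_mul_integral (M.memLp_w j c).aestronglyMeasurable
      (M.memLp_w k c').aestronglyMeasurable, M.w_mean, zero_mul, if_neg hjk]

def centered (S : Finset ℕ) (r : ℕ) (ω : Ω) : Fin M.q → ℝ :=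
  M.w r ω - (#S : ℝ)⁻¹ • ∑ j ∈ S, M.w j ω

theorem centered_apply {S : Finset ℕ} {r : ℕ} (hr : r ∈ S) (ω : Ω) (c : Fin M.q) :
    M.centered S r ω c = ∑ j ∈ S, ((if j = r then 1 else 0) - (#S : ℝ)⁻¹) * M.w j ω c := by
  simp only [centered, Pi.sub_apply, Pi.smul_apply, Finset.sum_apply, smul_eq_mul, sub_mul,
    ite_mul, one_mul, zero_mul, Finset.sum_sub_distrib, Finset.sum_ite_eq', if_pos hr,
    Finset.mul_sum]

theorem memLp_centered {S : Finset ℕ} {r : ℕ} (hr : r ∈ S) (c : Fin M.q) :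
    MemLp (fun ω => M.centered S r ω c) 2 M.P := by
  simp only [M.centered_apply hr]
  exact memLp_finsetSum S fun j _ => (M.memLp_w j c).const_mul _

theorem integral_centered_mul_centered {S : Finset ℕ} {r : ℕ} (hr : r ∈ S) (c c' : Fin M.q) :
    ∫ ω, M.centered S r ω c * M.centered S r ω c' ∂M.P =
      if c = c' then 1 - (#S : ℝ)⁻¹ else 0 := by
  simp only [M.centered_apply hr]
  rw [integral_sum_mul_sum_of_uncorrelated (fun j => M.memLp_w j c) (fun j => M.memLp_w j c')
    (fun j k => M.integral_w_mul_w j k c c'), sum_sq_indicator_sub_inv_card hr]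
  split_ifs <;> ring

theorem indepFun_centered {S T : Finset ℕ} (hST : Disjoint S T) {r s : ℕ} (hr : r ∈ S)
    (hs : s ∈ T) : IndepFun (M.centered S r) (M.centered T s) M.P := by
  have hcomp : ∀ (U : Finset ℕ) (u : ℕ) (hu : u ∈ U), M.centered U u =
      (fun v : U → Fin M.q → ℝ => v ⟨u, hu⟩ - (#U : ℝ)⁻¹ • ∑ i, v i) ∘ fun ω i => M.w i ω :=
    fun U u hu => funext fun ω => by
      rw [Function.comp_apply, Finset.sum_coe_sort U fun j => M.w j ω]
      rfl
  rw [hcomp S r hr, hcomp T s hs]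
  exact (M.w_indep.indepFun_finset S T hST M.w_meas).comp (by fun_prop) (by fun_prop)

theorem integrable_and_integral_sq_inner_centered {p : ℕ} (Γ : Matrix (Fin p) (Fin M.q) ℝ)
    {S T : Finset ℕ} (hST : Disjoint S T) {r s : ℕ} (hr : r ∈ S) (hs : s ∈ T) :
    Integrable (fun ω => ((Γ *ᵥ M.centered S r ω) ⬝ᵥ (Γ *ᵥ M.centered T s ω)) ^ 2) M.P ∧
      ∫ ω, ((Γ *ᵥ M.centered S r ω) ⬝ᵥ (Γ *ᵥ M.centered T s ω)) ^ 2 ∂M.P =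
        (1 - (#S : ℝ)⁻¹) * (1 - (#T : ℝ)⁻¹) * trace ((Γ * Γᵀ) ^ 2) := by
  simp only [dotProduct_mulVec_mulVec, ← trace_sq_transpose_mul_self]
  exact integrable_and_integral_sq_dotProduct_mulVec (M.indepFun_centered hST hr hs)
    (M.memLp_centered hr) (M.memLp_centered hs) (M.integral_centered_mul_centered hr)
    (M.integral_centered_mul_centered hs) _

theorem two_le_n1 : 2 ≤ M.n1 := by
  have := M.hn
  simp only [n1]
  omega

theorem two_le_n2 : 2 ≤ M.n2 := by
  have := M.hn
  simp only [n2, n1]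
  omega

section IndexSets

variable {M} {r s : ℕ}

theorem mem_V1_add (hr : 1 ≤ r) (hrs : r < s) (hsn : s ≤ M.n) : r ∈ M.V1 (r + s) := by
  have : M.n1 = (M.n + 1) / 2 := rfl
  have : M.n2 = M.n - M.n1 := rfl
  rw [V1]
  split_ifs <;> simp only [Finset.mem_Icc, Finset.mem_union] <;> omega

theorem mem_V2_add (hr : 1 ≤ r) (hrs : r < s) (hsn : s ≤ M.n) : s ∈ M.V2 (r + s) := by
  have : M.n1 = (M.n + 1) / 2 := rfl
  have : M.n2 = M.n - M.n1 := rfl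
  rw [V2]
  split_ifs <;> simp only [Finset.mem_Icc, Finset.mem_union] <;> omega

theorem disjoint_V1_V2 : Disjoint (M.V1 (r + s)) (M.V2 (r + s)) := by
  have : M.n1 = (M.n + 1) / 2 := rfl
  have : M.n2 = M.n - M.n1 := rfl
  rw [Finset.disjoint_left]
  intro a ha hb
  rw [V1] at ha
  rw [V2] at hb
  split_ifs at ha hb <;> simp only [Finset.mem_Icc, Finset.mem_union] at ha hb <;> omega

theorem card_V1 : #(M.V1 (r + s)) = M.n1 := by
  have : M.n1 = (M.n + 1) / 2 := rfl
  have : M.n2 = M.n - M.n1 := rfl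
  rw [V1]
  split_ifs
  · simp only [Nat.card_Icc]
    omega
  · rw [Finset.card_union_of_disjoint (Finset.disjoint_left.2 fun a ha hb => by
      simp only [Finset.mem_Icc] at ha hb; omega), Nat.card_Icc, Nat.card_Icc]
    omega

theorem card_V2 (hrs : r < s) (hsn : s ≤ M.n) : #(M.V2 (r + s)) = M.n2 := by
  have : M.n1 = (M.n + 1) / 2 := rfl
  have : M.n2 = M.n - M.n1 := rfl
  rw [V2]
  split_ifs
  · simp only [Nat.card_Icc]
    omega
  · rw [Finset.card_union_of_disjoint (Finset.disjoint_left.2 fun a ha hb => by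
      simp only [Finset.mem_Icc] at ha hb; omega), Nat.card_Icc, Nat.card_Icc]
    omega

end IndexSets

theorem u_mul_one_sub_inv_mul_one_sub_inv :
    M.u * ((1 - (M.n1 : ℝ)⁻¹) * (1 - (M.n2 : ℝ)⁻¹)) = 1 := by
  have h1 : (2 : ℝ) ≤ M.n1 := by exact_mod_cast M.two_le_n1
  have h2 : (2 : ℝ) ≤ M.n2 := by exact_mod_cast M.two_le_n2
  have h1' : (M.n1 : ℝ) - 1 ≠ 0 := by linarith
  have h2' : (M.n2 : ℝ) - 1 ≠ 0 := by linarith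
  rw [u]
  field_simp

theorem integrable_and_integral_sq_inner_sub_mean {p : ℕ} (Γ : Matrix (Fin p) (Fin M.q) ℝ)
    (μ : Fin p → ℝ) {x : ℕ → Ω → Fin p → ℝ} (hx : ∀ j ω, x j ω = Γ *ᵥ M.w j ω + μ)
    {xbar : ℕ → ℕ → Ω → Fin p → ℝ}
    (hxbar : ∀ i k ω a, xbar i k ω a = (∑ j ∈ M.Vset i k, x j ω a) / (M.nsub i : ℝ))
    {r s : ℕ} (hr : 1 ≤ r) (hrs : r < s) (hsn : s ≤ M.n) :
    Integrable (fun ω =>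
        (∑ a, (x r ω a - xbar 1 (r + s) ω a) * (x s ω a - xbar 2 (r + s) ω a)) ^ 2) M.P ∧
      ∫ ω, (∑ a, (x r ω a - xbar 1 (r + s) ω a) * (x s ω a - xbar 2 (r + s) ω a)) ^ 2 ∂M.P =
        (1 - (M.n1 : ℝ)⁻¹) * (1 - (M.n2 : ℝ)⁻¹) * trace ((Γ * Γᵀ) ^ 2) := by
  have hcentered : ∀ i (S : Finset ℕ), M.Vset i (r + s) = S → (M.nsub i : ℝ) = #S →
      ∀ t ∈ S, ∀ ω, x t ω - xbar i (r + s) ω = Γ *ᵥ M.centered S t ω := by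
    intro i S hS hcard t ht ω
    have hmean : xbar i (r + s) ω = (#S : ℝ)⁻¹ • ∑ j ∈ S, x j ω := by
      ext a
      rw [hxbar, hS, hcard, Pi.smul_apply, Finset.sum_apply, smul_eq_mul, inv_mul_eq_div]
    rw [hmean]
    simp only [hx]
    exact sub_inv_smul_sum_mulVec_add μ (fun j => M.w j ω) ht
  have hinner : ∀ ω, ∑ a, (x r ω a - xbar 1 (r + s) ω a) * (x s ω a - xbar 2 (r + s) ω a) =
      (Γ *ᵥ M.centered (M.V1 (r + s)) r ω) ⬝ᵥ (Γ *ᵥ M.centered (M.V2 (r + s)) s ω) := by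
    intro ω
    rw [← hcentered 1 _ (if_pos rfl) (by rw [nsub, if_pos rfl, card_V1]) r (mem_V1_add hr hrs hsn),
      ← hcentered 2 _ (if_neg (by decide)) (by rw [nsub, if_neg (by decide), card_V2 hrs hsn]) s
        (mem_V2_add hr hrs hsn)]
    rfl
  simp only [hinner]
  rw [← card_V1 (M := M) (r := r) (s := s), ← card_V2 hrs hsn]
  exact M.integrable_and_integral_sq_inner_centered Γ disjoint_V1_V2 (mem_V1_add hr hrs hsn)
    (mem_V2_add hr hrs hsn)

theorem integral_scaled_pair_sum_eq {f : ℕ → ℕ → Ω → ℝ} {τ : ℝ}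
    (hf : ∀ r s, 1 ≤ r → r < s → s ≤ M.n → Integrable (f r s) M.P ∧
      ∫ ω, f r s ω ∂M.P = (1 - (M.n1 : ℝ)⁻¹) * (1 - (M.n2 : ℝ)⁻¹) * τ) :
    ∫ ω, 2 * M.u / ((M.n : ℝ) * ((M.n : ℝ) - 1)) *
      ∑ s ∈ Finset.Icc 1 M.n, ∑ r ∈ Finset.Ico 1 s, f r s ω ∂M.P = τ := by
  have hf' : ∀ s ∈ Finset.Icc 1 M.n, ∀ r ∈ Finset.Ico 1 s, Integrable (f r s) M.P ∧
      ∫ ω, f r s ω ∂M.P = (1 - (M.n1 : ℝ)⁻¹) * (1 - (M.n2 : ℝ)⁻¹) * τ := by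
    intro s hs r hr
    rw [Finset.mem_Icc] at hs
    rw [Finset.mem_Ico] at hr
    exact hf r s hr.1 hr.2 hs.2
  rw [integral_const_mul, integral_finsetSum _ fun s hs =>
    integrable_finsetSum _ fun r hr => (hf' s hs r hr).1]
  rw [Finset.sum_congr rfl fun s hs => (integral_finsetSum _ fun r hr => (hf' s hs r hr).1).trans
    (Finset.sum_congr rfl fun r hr => (hf' s hs r hr).2), sum_Icc_sum_Ico_const]
  have hn : (4 : ℝ) ≤ M.n := by exact_mod_cast M.hn
  have hn0 : (M.n : ℝ) ≠ 0 := by linarith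
  have hn1 : (M.n : ℝ) - 1 ≠ 0 := by linarith
  calc 2 * M.u / (M.n * (M.n - 1)) * (M.n * (M.n - 1) / 2 *
        ((1 - (M.n1 : ℝ)⁻¹) * (1 - (M.n2 : ℝ)⁻¹) * τ))
      = M.u * ((1 - (M.n1 : ℝ)⁻¹) * (1 - (M.n2 : ℝ)⁻¹)) * τ := by field_simp
    _ = τ := by rw [M.u_mul_one_sub_inv_mul_one_sub_inv, one_mul]

end ECDMModel

/-- For `i = 1, 2`, the ECDM estimator `W_{in}` of `tr(Σᵢ²)` is exactly
unbiased: `E(W_{in}) = tr(Σᵢ²)`. -/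
theorem ecdm_W_unbiased {Ω : Type} [MeasurableSpace Ω] (M : ECDMModel Ω) :
    ∫ ω, M.W1 ω ∂M.P = Matrix.trace (M.Sig1 ^ 2) ∧
      ∫ ω, M.W2 ω ∂M.P = Matrix.trace (M.Sig2 ^ 2) :=
  ⟨M.integral_scaled_pair_sum_eq fun _ _ hr hrs hsn =>
      M.integrable_and_integral_sq_inner_sub_mean M.Γ₁ M.μ₁ (fun _ _ => rfl)
        (fun _ _ _ _ => rfl) hr hrs hsn,
    M.integral_scaled_pair_sum_eq fun _ _ hr hrs hsn =>
      M.integrable_and_integral_sq_inner_sub_mean M.Γ₂ M.μ₂ (fun _ _ => rfl)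
        (fun _ _ _ _ => rfl) hr hrs hsn⟩
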